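/- Let f(t) := Σ_{m=1}^∞ (1/m) sin²(t/2^m) (the Haraux–Souplet function) and let P_k(t) := Σ_{m=1}^k (1/m) sin²(t/2^m) denote its k-th partial sum, which is a continuous periodic function of period 2^{k+1}π. Then for every t ∈ ℝ and k ∈ ℕ, 0 ≤ f(t) − P_k(t) ≤ t² Σ_{m=k+1}^∞ 1/(m·4^m). Consequently, for every ε₀ > 0, sup_{N≥1} N^{−2−ε₀} sup_{|t|≤N} |f(t) − P_k(t)| → 0 as k → ∞; in particular, with the weight 𝔽_{[−N,N]} ≡ N^{−2−ε₀} and the metric of C[−N,N], the periodic functions P_k approximate f on every interval [−N,N]. -/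

import Mathlib

open Real Filter Topology

/-- The Haraux–Souplet function `f(t) = ∑_{m=1}^∞ (1/m) sin²(t/2^m)`. -/
noncomputable def harauxSouplet (t : ℝ) : ℝ :=
  ∑' m : ℕ, (1 / ((m : ℝ) + 1)) * Real.sin (t / 2 ^ (m + 1)) ^ 2

/-- The `k`-th partial sum `P_k(t) = ∑_{m=1}^k (1/m) sin²(t/2^m)`. -/
noncomputable def harauxSoupletPartial (k : ℕ) (t : ℝ) : ℝ :=
  ∑ m ∈ Finset.range k, (1 / ((m : ℝ) + 1)) * Real.sin (t / 2 ^ (m + 1)) ^ 2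

/-!
Since `sin² x ≤ x²`, the `m`-th term `(1/m) sin²(t/2^m)` is at most `t² / (m 4^m)`, so the tail
`f − P_k` is squeezed between `0` and `t²` times the tail of the convergent series
`∑ 1/(m 4^m)`. On `[-N, N]` this gives `|f − P_k| ≤ N² ∑_{m>k} 1/(m 4^m)`, and the weight
`N^{-2-ε₀} ≤ N^{-2}` absorbs the factor `N²` uniformly in `N ≥ 1`.
-/

lemma iSup_rpow_mul_iSup_abs_le {g : ℝ → ℝ} {c ε : ℝ} (hc : 0 ≤ c) (hε : 0 ≤ ε)
    (hg : ∀ t, |g t| ≤ t ^ 2 * c) :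
    ⨆ N : Set.Ici (1 : ℝ), (N : ℝ) ^ (-(2 + ε)) * ⨆ t : Set.Icc (-(N : ℝ)) N, |g t| ≤ c := by
  refine Real.iSup_le (fun ⟨N, hN⟩ => ?_) hc
  have hN : (1 : ℝ) ≤ N := hN
  have hN₀ : (0 : ℝ) < N := one_pos.trans_le hN
  have hsup : ⨆ t : Set.Icc (-N) N, |g t| ≤ N ^ 2 * c :=
    Real.iSup_le (fun t => (hg t).trans <| mul_le_mul_of_nonneg_right (sq_le_sq' t.2.1 t.2.2) hc)
      (by positivity)
  have hweight : N ^ (-(2 + ε)) * N ^ 2 ≤ 1 := by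
    rw [← Real.rpow_natCast N 2, ← Real.rpow_add hN₀]
    exact Real.rpow_le_one_of_one_le_of_nonpos hN (by push_cast; linarith)
  calc N ^ (-(2 + ε)) * ⨆ t : Set.Icc (-N) N, |g t|
      ≤ N ^ (-(2 + ε)) * (N ^ 2 * c) := by gcongr
    _ = (N ^ (-(2 + ε)) * N ^ 2) * c := by ring
    _ ≤ c := mul_le_of_le_one_left hc hweight

lemma tendsto_iSup_rpow_mul_iSup_abs {g : ℕ → ℝ → ℝ} {c : ℕ → ℝ} {ε : ℝ} (hε : 0 ≤ ε)
    (hc : Tendsto c atTop (𝓝 0)) (hc₀ : ∀ k, 0 ≤ c k) (hg : ∀ k t, |g k t| ≤ t ^ 2 * c k) :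
    Tendsto (fun k => ⨆ N : Set.Ici (1 : ℝ), (N : ℝ) ^ (-(2 + ε)) *
      ⨆ t : Set.Icc (-(N : ℝ)) N, |g k t|) atTop (𝓝 0) :=
  squeeze_zero
    (fun _ => Real.iSup_nonneg fun N =>
      mul_nonneg (Real.rpow_nonneg (zero_le_one.trans N.2) _)
        (Real.iSup_nonneg fun _ => abs_nonneg _))
    (fun k => iSup_rpow_mul_iSup_abs_le (hc₀ k) hε (hg k)) hc

namespace HarauxSouplet

noncomputable def term (m : ℕ) (t : ℝ) : ℝ :=
  (1 / ((m : ℝ) + 1)) * Real.sin (t / 2 ^ (m + 1)) ^ 2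

noncomputable def weight (n : ℕ) : ℝ :=
  1 / ((n : ℝ) * 4 ^ n)

lemma term_nonneg (m : ℕ) (t : ℝ) : 0 ≤ term m t := by
  unfold term; positivity

lemma term_le (m : ℕ) (t : ℝ) : term m t ≤ t ^ 2 * weight (m + 1) := by
  have hsin : Real.sin (t / 2 ^ (m + 1)) ^ 2 ≤ t ^ 2 / 4 ^ (m + 1) := by
    have : (t / 2 ^ (m + 1)) ^ 2 = t ^ 2 / 4 ^ (m + 1) := by
      rw [div_pow, ← pow_mul, mul_comm, pow_mul]; norm_num
    exact this ▸ Real.sin_sq_le_sq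
  calc term m t ≤ (1 / ((m : ℝ) + 1)) * (t ^ 2 / 4 ^ (m + 1)) := by
        unfold term; gcongr
    _ = t ^ 2 * weight (m + 1) := by
        rw [weight]; push_cast; field_simp

lemma weight_nonneg (n : ℕ) : 0 ≤ weight n := by
  unfold weight; positivity

lemma summable_weight : Summable weight := by
  refine Summable.of_nonneg_of_le weight_nonneg (fun n => ?_)
    (summable_geometric_of_lt_one (r := (1 / 4 : ℝ)) (by norm_num) (by norm_num))
  calc weight n = (n : ℝ)⁻¹ * (1 / 4) ^ n := by
        rw [weight, one_div_pow, one_div, one_div, mul_inv]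
    _ ≤ 1 * (1 / 4) ^ n := by gcongr; exact Nat.cast_inv_le_one n
    _ = (1 / 4) ^ n := one_mul _

lemma summable_term (t : ℝ) : Summable fun m => term m t :=
  Summable.of_nonneg_of_le (term_nonneg · t) (term_le · t)
    (((summable_nat_add_iff 1).mpr summable_weight).mul_left _)

lemma sub_partial_eq_tsum (k : ℕ) (t : ℝ) :
    harauxSouplet t - harauxSoupletPartial k t = ∑' m, term (m + k) t :=
  sub_eq_of_eq_add' ((summable_term t).sum_add_tsum_nat_add k).symm

lemma sub_partial_nonneg (k : ℕ) (t : ℝ) : 0 ≤ harauxSouplet t - harauxSoupletPartial k t :=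
  sub_partial_eq_tsum k t ▸ tsum_nonneg fun m => term_nonneg (m + k) t

lemma sub_partial_le (k : ℕ) (t : ℝ) :
    harauxSouplet t - harauxSoupletPartial k t ≤ t ^ 2 * ∑' m, weight (m + k + 1) := by
  rw [sub_partial_eq_tsum, ← tsum_mul_left]
  exact Summable.tsum_le_tsum (fun m => term_le (m + k) t)
    ((summable_nat_add_iff k).mpr (summable_term t))
    (((summable_nat_add_iff (k + 1)).mpr summable_weight).mul_left _)

lemma tendsto_tsum_weight : Tendsto (fun k => ∑' m, weight (m + k + 1)) atTop (𝓝 0) :=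
  tendsto_sum_nat_add fun n => weight (n + 1)

lemma continuous_partial (k : ℕ) : Continuous (harauxSoupletPartial k) := by
  unfold harauxSoupletPartial; fun_prop

lemma term_periodic (m : ℕ) : Function.Periodic (term m) (2 ^ (m + 1) * π) := by
  have hsq : Function.Periodic (fun x => Real.sin x ^ 2) π :=
    fun x => by simp only [Real.sin_add_pi, neg_sq]
  intro t
  simp only [term, hsq.div_const (2 ^ (m + 1)) t, mul_comm]

lemma partial_periodic (k : ℕ) :
    Function.Periodic (harauxSoupletPartial k) (2 ^ (k + 1) * π) := by
  intro t
  refine Finset.sum_congr rfl fun m hm => ?_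
  have hperiod : (2 : ℝ) ^ (k + 1) * π = ((2 ^ (k - m) : ℕ) : ℝ) * (2 ^ (m + 1) * π) := by
    push_cast
    rw [← mul_assoc, ← pow_add]
    have := Finset.mem_range.mp hm
    congr 2; omega
  exact hperiod ▸ (term_periodic m).nat_mul _ t

end HarauxSouplet

open HarauxSouplet

/-- Each `P_k` is continuous and periodic with period `2^{k+1} π`; the tail estimate
`0 ≤ f(t) − P_k(t) ≤ t² ∑_{m=k+1}^∞ 1/(m 4^m)` holds; and, for every `ε₀ > 0`,
`sup_{N ≥ 1} N^{−2−ε₀} sup_{|t| ≤ N} |f(t) − P_k(t)| → 0` as `k → ∞`: the periodic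
functions `P_k` approximate `f` in the Levitan metrical sense with weight
`𝔽_{[−N,N]} ≡ N^{−2−ε₀}` and the metric of `C[−N,N]`. -/
theorem stmt18 :
    (∀ k : ℕ, Continuous (harauxSoupletPartial k) ∧
      Function.Periodic (harauxSoupletPartial k) (2 ^ (k + 1) * Real.pi)) ∧
    (∀ t : ℝ, ∀ k : ℕ, 0 ≤ harauxSouplet t - harauxSoupletPartial k t ∧
      harauxSouplet t - harauxSoupletPartial k t ≤
        t ^ 2 * ∑' m : ℕ, 1 / ((((m + k + 1 : ℕ) : ℝ)) * 4 ^ (m + k + 1))) ∧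
    ∀ ε₀ : ℝ, 0 < ε₀ →
      Tendsto (fun k : ℕ => ⨆ N : Set.Ici (1 : ℝ), (N : ℝ) ^ (-(2 + ε₀)) *
          ⨆ t : Set.Icc (-(N : ℝ)) (N : ℝ), |harauxSouplet t - harauxSoupletPartial k t|)
        atTop (𝓝 0) := by
  refine ⟨fun k => ⟨continuous_partial k, partial_periodic k⟩,
    fun t k => ⟨sub_partial_nonneg k t, sub_partial_le k t⟩, fun ε₀ hε₀ => ?_⟩
  refine tendsto_iSup_rpow_mul_iSup_abs
    (g := fun k t => harauxSouplet t - harauxSoupletPartial k t) hε₀.le tendsto_tsum_weight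
    (fun k => tsum_nonneg fun m => weight_nonneg _) fun k t => ?_
  rw [abs_of_nonneg (sub_partial_nonneg k t)]
  exact sub_partial_le k t
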